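/- Permutation Invariance Lemma (Lemma 3.1, consequence). Under the assumptions of the Permutation Invariance Lemma (weights q_{n,i} and θ_{n,i} ∈ [0,1] satisfying (n−i)·q_{n,i}·θ_{n,i} = i·q_{n,i+1}·(1−θ_{n,i+1}) for 1 ≤ i ≤ n−1, independent δ_i ~ Bernoulli(θ_{n,i}) independent of the data, ζ_{i,k} = δ_i X_k + (1−δ_i)Y_k, and f a permutation invariant tensor-valued function), for any functions g_k(X,Y), 1 ≤ k ≤ n: A_{σ,i}[ q_{n,i} ⟨ f(U_{σ,i}, ζ_{i,σ_i}), g_{σ_i}(X,Y) ⟩ ] = ⟨ A_{σ,i}[ q_{n,i} f(U_{σ,i}, ζ_{i,σ_i}) ], n⁻¹ Σ_{k=1}^n g_k(X,Y) ⟩, where A_{σ,i}(·) = n⁻¹ Σ_{i=1}^n (n!)⁻¹ Σ_σ E[ · | X, Y, σ, i ] (the conditional expectation being over the δ_i) and ⟨·,·⟩ is the vectorized inner product of tensors. -/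

import Mathlib

/-!
Averaging over `δ_i` replaces `ζ_{i,σ_i}` by `X_{σ_i}` with probability `θ_i` and by `Y_{σ_i}`
otherwise, so every term is a value of `f` at a configuration carrying `X` in the first `j` slots
and `Y` in the others, read through `σ` (`j = i` or `i - 1` in the paper's indexing).
Subtracting the mean of `g` reduces the claim to showing that the left side vanishes when
`Σ_k g_k = 0`. For such `g`, the invariance of `f` under transpositions shows that
`S(j, a) = Σ_σ f(config_j ∘ σ) g_{σ_a}` only depends on whether the slot `a` holds an `X`, and
`Σ_a S(j, a) = 0` then gives `j · S(j, X-slot) + (n - j) · S(j, Y-slot) = 0`. Combined with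
`(n - i) q_{n,i} θ_{n,i} = i q_{n,i+1} (1 - θ_{n,i+1})` this makes the sum over `i` telescope,
and both boundary terms vanish because the extreme configurations are permutations of `Y` and of
`X`, on which `f` is constant.
-/

open MeasureTheory

namespace Stmt9

variable {n p m : ℕ}

/-- The interpolation configuration `(X_{σ_1}, …, X_{σ_{i−1}}, ζ, Y_{σ_{i+1}}, …, Y_{σ_n})`:
slot `k < i` holds `x (σ k)`, slot `i` holds `z`, and slot `k > i` holds `y (σ k)`. -/
def lindVec (x y : Fin n → Fin p → ℝ) (σ : Equiv.Perm (Fin n)) (i : Fin n)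
    (z : Fin p → ℝ) : Fin n → Fin p → ℝ :=
  fun k => if k < i then x (σ k) else if k = i then z else y (σ k)

/-- A tensor-valued function of `n` vectors in `ℝ^p` is permutation invariant if it is
unchanged by permuting its inputs.  An order-`m` tensor is a function
`(Fin m → Fin p) → ℝ` on multi-indices. -/
def PermInvariantT (f : (Fin n → Fin p → ℝ) → (Fin m → Fin p) → ℝ) : Prop :=
  ∀ (σ : Equiv.Perm (Fin n)) (v : Fin n → Fin p → ℝ), f (v ∘ σ) = f v

open Finset

section Configurations

variable {α : Type*} (x y : Fin n → α)

/-- In the paper's notation, `(X_{σ_1}, …, X_{σ_j}, Y_{σ_{j+1}}, …, Y_{σ_n})`. -/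
def prefixMix (σ : Equiv.Perm (Fin n)) (j : ℕ) : Fin n → α :=
  fun k => if (k : ℕ) < j then x (σ k) else y (σ k)

lemma prefixMix_mul (σ : Equiv.Perm (Fin n)) {τ : Equiv.Perm (Fin n)} {j : ℕ}
    (hτ : ∀ k, (τ k : ℕ) < j ↔ (k : ℕ) < j) :
    prefixMix x y (σ * τ) j = prefixMix x y σ j ∘ τ := by
  funext k
  simp [prefixMix, hτ]

/-- The conditional expectation of `Ψ(U_{σ,i}, ζ_{i,σ_i})` given `σ` and `i`, when
`δ_i ~ Bernoulli(θ)`. -/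
def bernoulliMix (Ψ : (Fin n → α) → ℝ) (θ : ℝ) (σ : Equiv.Perm (Fin n)) (i : Fin n) : ℝ :=
  θ * Ψ (prefixMix x y σ (i + 1)) + (1 - θ) * Ψ (prefixMix x y σ i)

lemma bernoulliMix_sum_mul {ι : Type*} (s : Finset ι) (Ψ : ι → (Fin n → α) → ℝ) (c : ι → ℝ)
    (θ : ℝ) (σ : Equiv.Perm (Fin n)) (i : Fin n) :
    bernoulliMix x y (fun v => ∑ ν ∈ s, Ψ ν v * c ν) θ σ i
      = ∑ ν ∈ s, bernoulliMix x y (Ψ ν) θ σ i * c ν := by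
  simp only [bernoulliMix, mul_sum, ← sum_add_distrib]
  exact sum_congr rfl fun ν _ => by ring

end Configurations

lemma lindVec_eq_prefixMix_succ (x y : Fin n → Fin p → ℝ) (σ : Equiv.Perm (Fin n))
    (i : Fin n) : lindVec x y σ i (x (σ i)) = prefixMix x y σ (i + 1) := by
  funext k
  simp only [lindVec, prefixMix, Fin.lt_def]
  split_ifs <;> first | rfl | omega | simp_all

lemma lindVec_eq_prefixMix (x y : Fin n → Fin p → ℝ) (σ : Equiv.Perm (Fin n)) (i : Fin n) :
    lindVec x y σ i (y (σ i)) = prefixMix x y σ i := by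
  funext k
  simp only [lindVec, prefixMix, Fin.lt_def]
  split_ifs <;> first | rfl | omega | simp_all

section SymmetricSums

variable {α : Type*} {x y : Fin n → α} {F : (Fin n → α) → ℝ}

lemma sum_prefixMix_mul_apply_eq_of_iff (hF : ∀ (σ : Equiv.Perm (Fin n)) v, F (v ∘ σ) = F v)
    (h : Fin n → ℝ) (j : ℕ) {a b : Fin n} (hab : (a : ℕ) < j ↔ (b : ℕ) < j) :
    ∑ σ : Equiv.Perm (Fin n), F (prefixMix x y σ j) * h (σ a)
      = ∑ σ : Equiv.Perm (Fin n), F (prefixMix x y σ j) * h (σ b) := by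
  have hswap : ∀ k, (Equiv.swap a b k : ℕ) < j ↔ (k : ℕ) < j := by
    intro k
    rw [Equiv.swap_apply_def]
    split_ifs <;> simp_all
  rw [← Equiv.sum_comp (Equiv.mulRight (Equiv.swap a b))]
  refine sum_congr rfl fun σ _ => ?_
  simp [prefixMix_mul x y σ hswap, hF]

lemma sum_sum_prefixMix_mul_apply_eq_zero (j : ℕ) {h : Fin n → ℝ} (hh : ∑ c, h c = 0) :
    ∑ c, ∑ σ : Equiv.Perm (Fin n), F (prefixMix x y σ j) * h (σ c) = 0 := by
  rw [sum_comm]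
  refine sum_eq_zero fun σ _ => ?_
  rw [← mul_sum, Equiv.sum_comp σ h, hh, mul_zero]

lemma sum_prefixMix_mul_apply_eq_zero_of_forall_iff
    (hF : ∀ (σ : Equiv.Perm (Fin n)) v, F (v ∘ σ) = F v) {h : Fin n → ℝ} (hh : ∑ c, h c = 0)
    {j : ℕ} {a : Fin n} (ha : ∀ c : Fin n, (c : ℕ) < j ↔ (a : ℕ) < j) :
    ∑ σ : Equiv.Perm (Fin n), F (prefixMix x y σ j) * h (σ a) = 0 := by
  have hsum := sum_sum_prefixMix_mul_apply_eq_zero (x := x) (y := y) (F := F) j hh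
  rw [sum_congr rfl fun c _ => sum_prefixMix_mul_apply_eq_of_iff hF h j (ha c)] at hsum
  simpa [a.pos.ne'] using hsum

lemma sum_prefixMix_mul_apply_balance (hF : ∀ (σ : Equiv.Perm (Fin n)) v, F (v ∘ σ) = F v)
    {h : Fin n → ℝ} (hh : ∑ c, h c = 0) {j : ℕ} {a b : Fin n} (ha : (a : ℕ) < j)
    (hb : j ≤ (b : ℕ)) :
    (j : ℝ) * ∑ σ : Equiv.Perm (Fin n), F (prefixMix x y σ j) * h (σ a)
      + ((n : ℝ) - j) * ∑ σ : Equiv.Perm (Fin n), F (prefixMix x y σ j) * h (σ b) = 0 := by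
  have hjn : j ≤ n := hb.trans b.is_lt.le
  rw [← sum_sum_prefixMix_mul_apply_eq_zero (x := x) (y := y) (F := F) j hh]
  calc _ = ∑ c : Fin n, if (c : ℕ) < j
          then ∑ σ : Equiv.Perm (Fin n), F (prefixMix x y σ j) * h (σ a)
          else ∑ σ : Equiv.Perm (Fin n), F (prefixMix x y σ j) * h (σ b) := by
        have hcard := card_filter_add_card_filter_not (s := univ) (fun c : Fin n => (c : ℕ) < j)
        rw [Fin.card_filter_val_lt, card_univ, Fintype.card_fin, min_eq_right hjn] at hcard
        rw [sum_ite, sum_const, sum_const, Fin.card_filter_val_lt, min_eq_right hjn,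
          Nat.eq_sub_of_add_eq' hcard, nsmul_eq_mul, nsmul_eq_mul, Nat.cast_sub hjn]
    _ = _ := by
      refine sum_congr rfl fun c _ => ?_
      split_ifs with hc
      · exact sum_prefixMix_mul_apply_eq_of_iff hF h j (iff_of_true ha hc)
      · exact sum_prefixMix_mul_apply_eq_of_iff hF h j (iff_of_false hb.not_gt hc)

end SymmetricSums

section Telescoping

variable {α : Type*} {k : ℕ} (x y : Fin (k + 1) → α) {F : (Fin (k + 1) → α) → ℝ}

lemma sum_sum_bernoulliMix_mul_apply_eq_zero
    (hF : ∀ (σ : Equiv.Perm (Fin (k + 1))) v, F (v ∘ σ) = F v) (q θ : Fin (k + 1) → ℝ)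
    (hqθ : ∀ t : Fin k,
      ((k : ℝ) - t) * q t.castSucc * θ t.castSucc = ((t : ℝ) + 1) * q t.succ * (1 - θ t.succ))
    {h : Fin (k + 1) → ℝ} (hh : ∑ c, h c = 0) :
    ∑ i, ∑ σ : Equiv.Perm (Fin (k + 1)), q i * bernoulliMix x y F (θ i) σ i * h (σ i) = 0 := by
  set S : ℕ → Fin (k + 1) → ℝ := fun j a =>
    ∑ σ : Equiv.Perm (Fin (k + 1)), F (prefixMix x y σ j) * h (σ a) with hS
  have hsplit : ∀ i, ∑ σ : Equiv.Perm (Fin (k + 1)), q i * bernoulliMix x y F (θ i) σ i * h (σ i)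
      = q i * θ i * S (i + 1) i + q i * (1 - θ i) * S i i := by
    intro i
    simp only [hS, bernoulliMix, mul_sum, ← sum_add_distrib]
    exact sum_congr rfl fun σ _ => by ring
  have hstep : ∀ t : Fin k, q t.castSucc * θ t.castSucc * S (t + 1) t.castSucc
      = -(q t.succ * (1 - θ t.succ) * S (t + 1) t.succ) := by
    intro t
    have hbal := sum_prefixMix_mul_apply_balance (x := x) (y := y) hF hh (j := t + 1)
      (a := t.castSucc) (b := t.succ) (by simp) (by simp)
    apply mul_left_cancel₀ (by positivity : (t : ℝ) + 1 ≠ 0)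
    push_cast at hbal
    linear_combination q t.castSucc * θ t.castSucc * hbal - S (t + 1) t.succ * hqθ t
  have hlast : S (k + 1) (Fin.last k) = 0 :=
    sum_prefixMix_mul_apply_eq_zero_of_forall_iff hF hh fun c => by simp [c.is_lt]
  have hfirst : S 0 0 = 0 := sum_prefixMix_mul_apply_eq_zero_of_forall_iff hF hh fun c => by simp
  rw [sum_congr rfl fun i _ => hsplit i, sum_add_distrib, Fin.sum_univ_castSucc,
    Fin.sum_univ_succ]
  simp [hstep, hlast, hfirst]

lemma sum_sum_bernoulliMix_mul_apply
    (hF : ∀ (σ : Equiv.Perm (Fin (k + 1))) v, F (v ∘ σ) = F v) (q θ : Fin (k + 1) → ℝ)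
    (hqθ : ∀ t : Fin k,
      ((k : ℝ) - t) * q t.castSucc * θ t.castSucc = ((t : ℝ) + 1) * q t.succ * (1 - θ t.succ))
    (h : Fin (k + 1) → ℝ) :
    ∑ i, ∑ σ : Equiv.Perm (Fin (k + 1)), q i * bernoulliMix x y F (θ i) σ i * h (σ i)
      = (∑ i, ∑ σ : Equiv.Perm (Fin (k + 1)), q i * bernoulliMix x y F (θ i) σ i)
        * (((k + 1 : ℕ) : ℝ)⁻¹ * ∑ c, h c) := by
  set mean := ((k + 1 : ℕ) : ℝ)⁻¹ * ∑ c, h c with hmean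
  have hcentered : ∑ c, (h c - mean) = 0 := by
    rw [sum_sub_distrib, sum_const, card_univ, Fintype.card_fin, nsmul_eq_mul, hmean,
      mul_inv_cancel_left₀ (by positivity), sub_self]
  have hzero := sum_sum_bernoulliMix_mul_apply_eq_zero x y hF q θ hqθ hcentered
  simp only [mul_sub, sum_sub_distrib, sub_eq_zero] at hzero
  simp only [hzero, sum_mul]

end Telescoping

lemma integral_comp_of_bernoulli {Ω : Type*} [MeasurableSpace Ω] (μ : Measure Ω)
    [IsProbabilityMeasure μ] {d : Ω → ℝ} (hd : Measurable d) (h01 : ∀ ω, d ω = 0 ∨ d ω = 1)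
    {θ : ℝ} (hθ : 0 ≤ θ) (hb : μ {ω | d ω = 1} = ENNReal.ofReal θ) (Φ : ℝ → ℝ) :
    ∫ ω, Φ (d ω) ∂μ = θ * Φ 1 + (1 - θ) * Φ 0 := by
  set s := {ω | d ω = 1}
  have hs : MeasurableSet s := hd (measurableSet_singleton 1)
  have hΦ : (fun ω => Φ (d ω)) = s.indicator (fun _ => Φ 1) + sᶜ.indicator (fun _ => Φ 0) := by
    funext ω
    rcases h01 ω with h0 | h1
    · simp [s, h0]
    · simp [s, h1]
  have hθs : μ.real s = θ := by rw [measureReal_def, hb, ENNReal.toReal_ofReal hθ]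
  rw [hΦ, integral_add' ((integrable_const _).indicator hs)
      ((integrable_const _).indicator hs.compl),
    integral_indicator_const _ hs, integral_indicator_const _ hs.compl,
    probReal_compl_eq_one_sub hs, hθs, smul_eq_mul, smul_eq_mul]

lemma integral_lindVec_of_bernoulli {Ω : Type*} [MeasurableSpace Ω] (μ : Measure Ω)
    [IsProbabilityMeasure μ] {d : Ω → ℝ} (hd : Measurable d) (h01 : ∀ ω, d ω = 0 ∨ d ω = 1)
    {θ : ℝ} (hθ : 0 ≤ θ) (hb : μ {ω | d ω = 1} = ENNReal.ofReal θ)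
    (x y : Fin n → Fin p → ℝ) (σ : Equiv.Perm (Fin n)) (i : Fin n)
    (Ψ : (Fin n → Fin p → ℝ) → ℝ) :
    ∫ ω, Ψ (lindVec x y σ i fun j => d ω * x (σ i) j + (1 - d ω) * y (σ i) j) ∂μ
      = bernoulliMix x y Ψ θ σ i := by
  rw [integral_comp_of_bernoulli μ hd h01 hθ hb
    fun t => Ψ (lindVec x y σ i fun j => t * x (σ i) j + (1 - t) * y (σ i) j)]
  simp only [one_mul, sub_self, zero_mul, add_zero, zero_add, sub_zero]
  rw [lindVec_eq_prefixMix_succ, lindVec_eq_prefixMix, bernoulliMix]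

/-- **Permutation Invariance Lemma (Lemma 3.1, consequence).**
Under the assumptions of the Permutation Invariance Lemma, for any tensors
`g_k, 1 ≤ k ≤ n` (functions of the conditioned-upon data):
`A_{σ,i}[ q_{n,i} ⟨f(U_{σ,i}, ζ_{i,σ_i}), g_{σ_i}⟩ ]
  = ⟨ A_{σ,i}[ q_{n,i} f(U_{σ,i}, ζ_{i,σ_i}) ], n⁻¹ Σ_k g_k ⟩`,
where `A_{σ,i}(·) = n⁻¹ Σᵢ (n!)⁻¹ Σ_σ E[ · | X, Y, σ, i ]` and `⟨·,·⟩` is the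
vectorized inner product of tensors. -/
theorem permutation_invariance_consequence
    {Ωδ : Type*} [MeasurableSpace Ωδ] (μδ : Measure Ωδ) [IsProbabilityMeasure μδ]
    (x y : Fin n → Fin p → ℝ)
    (q θ : Fin n → ℝ) (hθ : ∀ i, θ i ∈ Set.Icc (0 : ℝ) 1)
    (hqθ : ∀ (i : ℕ) (h1 : 1 ≤ i) (h : i < n),
      ((n : ℝ) - i) * q ⟨i - 1, by omega⟩ * θ ⟨i - 1, by omega⟩
        = (i : ℝ) * q ⟨i, h⟩ * (1 - θ ⟨i, h⟩))
    (δ : Fin n → Ωδ → ℝ)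
    (hδmeas : ∀ i, Measurable (δ i))
    (hδ01 : ∀ i ω, δ i ω = 0 ∨ δ i ω = 1)
    (hδbern : ∀ i, μδ {ω | δ i ω = 1} = ENNReal.ofReal (θ i))
    (f : (Fin n → Fin p → ℝ) → (Fin m → Fin p) → ℝ) (hf : PermInvariantT f)
    (g : Fin n → (Fin m → Fin p) → ℝ) :
    (n : ℝ)⁻¹ * ∑ i : Fin n, ((n.factorial : ℝ))⁻¹ * ∑ σ : Equiv.Perm (Fin n),
      ∫ ω, q i * ∑ ν : Fin m → Fin p,
        f (lindVec x y σ i (fun j => δ i ω * x (σ i) j + (1 - δ i ω) * y (σ i) j)) ν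
          * g (σ i) ν ∂μδ
    = ∑ ν : Fin m → Fin p,
        ((n : ℝ)⁻¹ * ∑ i : Fin n, ((n.factorial : ℝ))⁻¹ * ∑ σ : Equiv.Perm (Fin n),
          ∫ ω, q i *
            f (lindVec x y σ i (fun j => δ i ω * x (σ i) j + (1 - δ i ω) * y (σ i) j)) ν ∂μδ)
        * ((n : ℝ)⁻¹ * ∑ k, g k ν) := by
  obtain _ | k := n
  · simp
  have hrec : ∀ t : Fin k,
      ((k : ℝ) - t) * q t.castSucc * θ t.castSucc = ((t : ℝ) + 1) * q t.succ * (1 - θ t.succ) := by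
    intro t
    have h := hqθ (t + 1) (by omega) (by omega)
    push_cast at h
    rw [show (k : ℝ) - t = k + 1 - (t + 1) by ring]
    exact h
  have hcoord := fun ν => sum_sum_bernoulliMix_mul_apply x y (F := fun v => f v ν)
    (fun σ v => congrFun (hf σ v) ν) q θ hrec (fun c => g c ν)
  have hE := fun i σ => integral_lindVec_of_bernoulli μδ (hδmeas i) (hδ01 i) (hθ i).1 (hδbern i)
    x y σ i
  -- the integrands match `Ψ (lindVec …)` only up to β-reduction, so `Ψ` is supplied by hand
  have hL := fun i σ => (hE i σ fun v => ∑ ν, f v ν * g (σ i) ν).trans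
    (bernoulliMix_sum_mul x y univ (fun ν v => f v ν) (fun ν => g (σ i) ν) (θ i) σ i)
  have hR := fun i σ ν => hE i σ fun v => f v ν
  beta_reduce at hL hR
  simp only [integral_const_mul, hL, hR]
  calc _ = ∑ ν, ((↑(k + 1))⁻¹ * (↑(k + 1).factorial)⁻¹) * ∑ i, ∑ σ : Equiv.Perm (Fin (k + 1)),
        q i * bernoulliMix x y (f · ν) (θ i) σ i * g (σ i) ν := by
        simp only [mul_sum]
        simp_rw [sum_comm (γ := Fin m → Fin p)]
        exact sum_congr rfl fun i _ => sum_congr rfl fun σ _ => sum_congr rfl fun ν _ => by ring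
    _ = _ := by
      refine sum_congr rfl fun ν _ => ?_
      rw [hcoord, ← mul_sum]
      ring

end Stmt9
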